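/- arXiv:1511.00028 — 2 statements merged into one kernel-verified Lean document; each statement's English description precedes it below -/
import Mathlib

section
/- For all y < 0 and b ∈ [0,1], |G(y,b) − (−b·y)| ≤ e^{−y²/2}/y², where G(y,b) = φ(y) + y·Φ(y) − b·y. -/
open MeasureTheory ProbabilityTheory

/-- Standard normal density. -/
noncomputable def stdPdf (x : ℝ) : ℝ := Real.exp (-(x ^ 2) / 2) / Real.sqrt (2 * Real.pi)

/-- Standard normal CDF. -/
noncomputable def stdCdf (x : ℝ) : ℝ := ∫ t in Set.Iic x, stdPdf t

/-- Standard normal quantile function. -/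
noncomputable def stdQuantile (p : ℝ) : ℝ := Function.invFun stdCdf p

/-- The function `G(w, β) = φ(w) + w Φ(w) - β w`. -/
noncomputable def G (w β : ℝ) : ℝ := stdPdf w + w * stdCdf w - β * w

/-!
Since `∫_{-∞}^y t φ(t) dt = -φ(y)`, we have `G(y, b) + b y = φ(y) + y Φ(y) = ∫_{-∞}^y (y - t) φ(t) dt`,
which is nonnegative. For the upper bound, differentiating `-t φ(t) / (t² + 1)` gives
`φ(t) (1 - 2 / (t² + 1)²) ≤ φ(t)`, whence the Mills-type bound `Φ(y) ≥ -y φ(y) / (y² + 1)`.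
Multiplied by `y < 0` this yields `φ(y) + y Φ(y) ≤ φ(y) / (y² + 1) ≤ e^{-y²/2} / y²`.
-/

open Filter Set

lemma one_le_sqrt_two_pi : (1 : ℝ) ≤ Real.sqrt (2 * Real.pi) :=
  Real.one_le_sqrt.2 (by nlinarith [Real.pi_gt_three])

lemma stdPdf_pos (x : ℝ) : 0 < stdPdf x := by
  unfold stdPdf; positivity

lemma stdPdf_le_exp (x : ℝ) : stdPdf x ≤ Real.exp (-(x ^ 2) / 2) :=
  div_le_self (Real.exp_pos _).le one_le_sqrt_two_pi

lemma stdPdf_eq_inv_mul_exp (x : ℝ) :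
    stdPdf x = (Real.sqrt (2 * Real.pi))⁻¹ * Real.exp (-(1 / 2) * x ^ 2) := by
  unfold stdPdf; ring_nf

@[fun_prop]
lemma continuous_stdPdf : Continuous stdPdf := by
  unfold stdPdf; fun_prop

lemma hasDerivAt_stdPdf (x : ℝ) : HasDerivAt stdPdf (-x * stdPdf x) x := by
  have h : HasDerivAt (fun x : ℝ => -(x ^ 2) / 2) (-x) x :=
    ((hasDerivAt_pow 2 x).neg.div_const 2).congr_deriv (by norm_num; ring)
  exact (h.exp.div_const (Real.sqrt (2 * Real.pi))).congr_deriv (by unfold stdPdf; ring)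

lemma integrable_stdPdf : Integrable stdPdf := by
  rw [show stdPdf = _ from funext stdPdf_eq_inv_mul_exp]
  exact (integrable_exp_neg_mul_sq (b := 1 / 2) (by norm_num)).const_mul
    (Real.sqrt (2 * Real.pi))⁻¹

lemma integrable_mul_stdPdf : Integrable fun t => t * stdPdf t := by
  simpa only [stdPdf_eq_inv_mul_exp, mul_left_comm] using
    (integrable_mul_exp_neg_mul_sq (b := 1 / 2) (by norm_num)).const_mul
      (Real.sqrt (2 * Real.pi))⁻¹

lemma tendsto_stdPdf_atBot : Tendsto stdPdf atBot (nhds 0) := by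
  have hsq : Tendsto (fun x : ℝ => x ^ 2) atBot atTop := by
    simpa only [Function.comp_def, even_two.neg_pow] using
      (tendsto_pow_atTop (α := ℝ) two_ne_zero).comp tendsto_neg_atBot_atTop
  have h := (Real.tendsto_exp_atBot.comp
    ((tendsto_neg_atTop_atBot.comp hsq).atBot_div_const two_pos)).div_const
      (Real.sqrt (2 * Real.pi))
  rw [zero_div] at h
  exact h

lemma integral_Iic_mul_stdPdf (y : ℝ) : ∫ t in Iic y, t * stdPdf t = -stdPdf y := by
  have h := integral_Iic_of_hasDerivAt_of_tendsto' (f := fun t => -stdPdf t) (a := y)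
    (fun t _ => (hasDerivAt_stdPdf t).neg.congr_deriv (by ring))
    integrable_mul_stdPdf.integrableOn (by simpa using tendsto_stdPdf_atBot.neg)
  simpa using h

lemma stdPdf_add_mul_stdCdf_eq_integral (y : ℝ) :
    stdPdf y + y * stdCdf y = ∫ t in Iic y, (y - t) * stdPdf t := by
  simp only [sub_mul]
  rw [integral_sub (integrable_stdPdf.const_mul y).integrableOn
    integrable_mul_stdPdf.integrableOn, integral_const_mul, integral_Iic_mul_stdPdf, stdCdf]
  ring

lemma stdPdf_add_mul_stdCdf_nonneg (y : ℝ) : 0 ≤ stdPdf y + y * stdCdf y := by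
  rw [stdPdf_add_mul_stdCdf_eq_integral]
  exact setIntegral_nonneg measurableSet_Iic fun t ht =>
    mul_nonneg (sub_nonneg.2 ht) (stdPdf_pos t).le

noncomputable def millsLower (t : ℝ) : ℝ := -(t * stdPdf t) / (t ^ 2 + 1)

lemma hasDerivAt_millsLower (t : ℝ) :
    HasDerivAt millsLower (stdPdf t * (1 - 2 / (t ^ 2 + 1) ^ 2)) t := by
  have hden : HasDerivAt (fun t : ℝ => t ^ 2 + 1) (2 * t) t := by
    simpa using (hasDerivAt_pow 2 t).add_const 1
  have h : HasDerivAt millsLower _ t :=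
    ((hasDerivAt_id' t).mul (hasDerivAt_stdPdf t)).neg.div hden (by positivity)
  refine h.congr_deriv ?_
  simp only [Pi.neg_apply, Pi.mul_apply]
  field_simp
  ring

lemma abs_one_sub_two_div_sq_add_one_sq_le (t : ℝ) : |1 - 2 / (t ^ 2 + 1) ^ 2| ≤ 1 := by
  have h0 : 0 ≤ 2 / (t ^ 2 + 1) ^ 2 := by positivity
  have h2 : 2 / (t ^ 2 + 1) ^ 2 ≤ 2 :=
    div_le_self zero_le_two (one_le_pow₀ (by nlinarith [sq_nonneg t]))
  exact abs_le.2 ⟨by linarith, by linarith⟩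

lemma integrable_deriv_millsLower : Integrable fun t => stdPdf t * (1 - 2 / (t ^ 2 + 1) ^ 2) := by
  have hcont : Continuous fun t => stdPdf t * (1 - 2 / (t ^ 2 + 1) ^ 2) := by
    fun_prop (disch := intro; positivity)
  refine integrable_stdPdf.mono' hcont.aestronglyMeasurable (Eventually.of_forall fun t => ?_)
  rw [Real.norm_eq_abs, abs_mul, abs_of_pos (stdPdf_pos t)]
  exact mul_le_of_le_one_right (stdPdf_pos t).le (abs_one_sub_two_div_sq_add_one_sq_le t)

lemma tendsto_millsLower_atBot : Tendsto millsLower atBot (nhds 0) := by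
  refine squeeze_zero_norm (fun t => ?_) tendsto_stdPdf_atBot
  rw [millsLower, Real.norm_eq_abs, abs_div, abs_neg, abs_mul, abs_of_pos (stdPdf_pos t),
    abs_of_pos (by positivity : (0 : ℝ) < t ^ 2 + 1), div_le_iff₀ (by positivity)]
  nlinarith [stdPdf_pos t, sq_nonneg (|t| - 1), sq_abs t]

lemma millsLower_le_stdCdf (y : ℝ) : millsLower y ≤ stdCdf y := by
  have h := integral_Iic_of_hasDerivAt_of_tendsto' (a := y) (fun t _ => hasDerivAt_millsLower t)
    integrable_deriv_millsLower.integrableOn tendsto_millsLower_atBot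
  rw [sub_zero] at h
  rw [← h, stdCdf]
  exact setIntegral_mono integrable_deriv_millsLower.integrableOn integrable_stdPdf.integrableOn
    fun t => mul_le_of_le_one_right (stdPdf_pos t).le
      ((le_abs_self _).trans (abs_one_sub_two_div_sq_add_one_sq_le t))

lemma stdPdf_add_mul_stdCdf_le {y : ℝ} (hy : y ≤ 0) :
    stdPdf y + y * stdCdf y ≤ stdPdf y / (y ^ 2 + 1) := by
  have h := mul_le_mul_of_nonpos_left (millsLower_le_stdCdf y) hy
  have heq : stdPdf y + y * millsLower y = stdPdf y / (y ^ 2 + 1) := by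
    unfold millsLower; field_simp; ring
  linarith

theorem stmt5_general (y b : ℝ) (hy : y < 0) :
    |G y b - (-(b * y))| ≤ Real.exp (-(y ^ 2) / 2) / y ^ 2 := by
  have hG : G y b - (-(b * y)) = stdPdf y + y * stdCdf y := by unfold G; ring
  have hy2 : 0 < y ^ 2 := sq_pos_of_neg hy
  rw [hG, abs_of_nonneg (stdPdf_add_mul_stdCdf_nonneg y)]
  calc stdPdf y + y * stdCdf y ≤ stdPdf y / (y ^ 2 + 1) := stdPdf_add_mul_stdCdf_le hy.le
    _ ≤ stdPdf y / y ^ 2 := div_le_div_of_nonneg_left (stdPdf_pos y).le hy2 (by linarith)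
    _ ≤ Real.exp (-(y ^ 2) / 2) / y ^ 2 := div_le_div_of_nonneg_right (stdPdf_le_exp y) hy2.le

theorem stmt5 (y b : ℝ) (hy : y < 0) (hb : b ∈ Set.Icc (0 : ℝ) 1) :
    |G y b - (-(b * y))| ≤ Real.exp (-(y ^ 2) / 2) / y ^ 2 :=
  stmt5_general y b hy
end

section
/- If X ~ N(θ,1), then for every integer k ≥ 1, E[H_k(X)²] ≤ k^k · (1 + θ²/k)^k, where H_k is the k-th probabilists' Hermite polynomial. -/
/-!
Write `X = Z + θ` with `Z` standard normal. Taylor expansion, together with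
`hasseDeriv m (hermite k) = k.choose m • hermite (k - m)`, gives the Appell identity
`H_k(x + θ) = ∑ₘ C(k,m) θ^(k-m) H_m(x)`. Gaussian integration by parts,
`∫ (x p - p') q φ = ∫ p q' φ` for the standard normal density `φ`, gives the orthogonality
`∫ H_m H_n φ = δₘₙ m!`, hence `E[H_k(X)²] = ∑ₘ C(k,m)² θ^(2(k-m)) m!`. Since
`C(k,m) m! = k(k-1)⋯(k-m+1) ≤ k^m`, this is at most `∑ₘ C(k,m) k^m θ^(2(k-m)) = (k + θ²)^k`.
-/

open MeasureTheory ProbabilityTheory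

/-- The `k`-th probabilists' Hermite polynomial, evaluated at a real number. -/
noncomputable def hermiteP (k : ℕ) (x : ℝ) : ℝ := Polynomial.aeval x (Polynomial.hermite k)

open Polynomial Real
open scoped Nat

namespace Polynomial

theorem derivative_hermite_succ (n : ℕ) :
    derivative (hermite (n + 1)) = (n + 1) • hermite n := by
  induction n with
  | zero => simp [hermite_zero]
  | succ n ih =>
    rw [hermite_succ (n + 1), derivative_sub, derivative_mul, ih, derivative_smul, derivative_X,
      hermite_succ n]
    simp only [one_mul, mul_smul_comm]
    module

theorem iterate_derivative_hermite (k m : ℕ) :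
    derivative^[m] (hermite k) = k.descFactorial m • hermite (k - m) := by
  induction m generalizing k with
  | zero => simp
  | succ m ih =>
    rcases k with _ | k
    · simp [hermite_zero]
    · rw [Function.iterate_succ_apply, derivative_hermite_succ, iterate_derivative_smul, ih,
        smul_smul, Nat.succ_descFactorial_succ, Nat.add_sub_add_right]

theorem hasseDeriv_hermite (k m : ℕ) :
    hasseDeriv m (hermite k) = k.choose m • hermite (k - m) := by
  refine nsmul_right_injective (Nat.factorial_ne_zero m) ?_
  dsimp only
  rw [← LinearMap.smul_apply, factorial_smul_hasseDeriv, iterate_derivative_hermite, smul_smul,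
    Nat.descFactorial_eq_factorial_mul_choose]

theorem map_hasseDeriv {R S : Type*} [Semiring R] [Semiring S] (f : R →+* S) (p : R[X]) (m : ℕ) :
    (hasseDeriv m p).map f = hasseDeriv m (p.map f) := by
  ext n
  simp [hasseDeriv_coeff, coeff_map]

theorem eval_add_eq_sum_hasseDeriv {R : Type*} [CommSemiring R] (p : R[X]) (x y : R) :
    p.eval (x + y) = ∑ m ∈ Finset.range (p.natDegree + 1), (hasseDeriv m p).eval x * y ^ m := by
  rw [add_comm, ← taylor_eval, eval_eq_sum_range, natDegree_taylor]
  simp only [taylor_coeff]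

end Polynomial

theorem hermiteP_eq_eval_map (k : ℕ) (x : ℝ) :
    hermiteP k x = ((hermite k).map (algebraMap ℤ ℝ)).eval x :=
  (eval_map_algebraMap _ _).symm

theorem hermiteP_zero (x : ℝ) : hermiteP 0 x = 1 := by
  simp [hermiteP, hermite_zero]

theorem hermiteP_add (k : ℕ) (x y : ℝ) :
    hermiteP k (x + y) = ∑ m ∈ Finset.range (k + 1), k.choose m * y ^ (k - m) * hermiteP m x := by
  rw [hermiteP_eq_eval_map, eval_add_eq_sum_hasseDeriv,
    natDegree_map_eq_of_injective (algebraMap ℤ ℝ).injective_int, natDegree_hermite,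
    ← Finset.sum_range_reflect]
  refine Finset.sum_congr rfl fun m hm => ?_
  have hmk : m ≤ k := Nat.lt_succ_iff.mp (Finset.mem_range.mp hm)
  rw [Nat.add_sub_cancel, ← map_hasseDeriv, hasseDeriv_hermite, nsmul_eq_mul, Polynomial.map_mul,
    Polynomial.map_natCast, eval_mul, eval_natCast, ← hermiteP_eq_eval_map, Nat.sub_sub_self hmk,
    Nat.choose_symm hmk]
  ring

theorem gaussianPDFReal_zero_one (x : ℝ) :
    gaussianPDFReal 0 1 x = (√(2 * π))⁻¹ * exp (-(1 / 2) * x ^ 2) := by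
  simp only [gaussianPDFReal, NNReal.coe_one, mul_one, sub_zero]
  ring_nf

theorem hasDerivAt_gaussianPDFReal_zero_one (x : ℝ) :
    HasDerivAt (gaussianPDFReal 0 1) (-x * gaussianPDFReal 0 1 x) x := by
  rw [funext gaussianPDFReal_zero_one]
  refine ((((hasDerivAt_pow 2 x).const_mul (-(1 / 2) : ℝ)).exp).const_mul _).congr_deriv ?_
  push_cast
  ring

theorem integrable_pow_mul_gaussianPDFReal (n : ℕ) :
    Integrable fun x : ℝ => x ^ n * gaussianPDFReal 0 1 x := by
  have h := (integrable_rpow_mul_exp_neg_mul_sq (b := 1 / 2) (by norm_num)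
    (s := n) (neg_one_lt_zero.trans_le n.cast_nonneg)).const_mul (√(2 * π))⁻¹
  simp only [rpow_natCast] at h
  convert h using 2 with x
  rw [gaussianPDFReal_zero_one]
  ring

theorem integrable_eval_mul_gaussianPDFReal (p : ℝ[X]) :
    Integrable fun x : ℝ => p.eval x * gaussianPDFReal 0 1 x := by
  simp only [eval_eq_sum_range, Finset.sum_mul, mul_assoc]
  exact integrable_finsetSum _ fun i _ => (integrable_pow_mul_gaussianPDFReal i).const_mul _

theorem integral_eval_mul_gaussianPDFReal_mul (p q : ℝ[X]) :
    ∫ x, (X * p - derivative p).eval x * q.eval x * gaussianPDFReal 0 1 x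
      = ∫ x, p.eval x * (derivative q).eval x * gaussianPDFReal 0 1 x := by
  have hderiv : ∀ x, HasDerivAt (fun x => -(p * q).eval x * gaussianPDFReal 0 1 x)
      ((X * p - derivative p).eval x * q.eval x * gaussianPDFReal 0 1 x
        - p.eval x * (derivative q).eval x * gaussianPDFReal 0 1 x) x := fun x => by
    refine (((p * q).hasDerivAt x).fun_neg.fun_mul
      (hasDerivAt_gaussianPDFReal_zero_one x)).congr_deriv ?_
    simp only [eval_sub, eval_mul, eval_X, derivative_mul, eval_add]
    ring
  have hintegrable : ∀ r : ℝ[X], Integrable fun x => r.eval x * gaussianPDFReal 0 1 x :=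
    integrable_eval_mul_gaussianPDFReal
  have h₁ := hintegrable ((X * p - derivative p) * q)
  have h₂ := hintegrable (p * derivative q)
  simp only [eval_mul] at h₁ h₂
  rw [← sub_eq_zero, ← integral_sub h₁ h₂]
  exact integral_eq_zero_of_hasDerivAt_of_integrable hderiv (h₁.sub h₂)
    (by simpa only [neg_mul] using (hintegrable (p * q)).fun_neg)

theorem integral_hermiteP_mul_eval_mul_gaussianPDFReal (n : ℕ) (q : ℝ[X]) :
    ∫ x, hermiteP n x * q.eval x * gaussianPDFReal 0 1 x
      = ∫ x, (derivative^[n] q).eval x * gaussianPDFReal 0 1 x := by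
  induction n generalizing q with
  | zero => simp [hermiteP_zero]
  | succ n ih =>
    set p := (hermite n).map (algebraMap ℤ ℝ)
    have hsucc (x : ℝ) : hermiteP (n + 1) x = (X * p - derivative p).eval x := by
      rw [hermiteP_eq_eval_map, hermite_succ, Polynomial.map_sub, Polynomial.map_mul, map_X,
        derivative_map]
    simp_rw [hsucc, integral_eval_mul_gaussianPDFReal_mul, p, ← hermiteP_eq_eval_map, ih,
      Function.iterate_succ_apply]

theorem integral_hermiteP_mul_hermiteP_mul_gaussianPDFReal_eq_descFactorial_mul (m n : ℕ) :
    ∫ x, hermiteP m x * hermiteP n x * gaussianPDFReal 0 1 x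
      = n.descFactorial m * ∫ x, hermiteP (n - m) x * gaussianPDFReal 0 1 x := by
  simp_rw [hermiteP_eq_eval_map n, integral_hermiteP_mul_eval_mul_gaussianPDFReal,
    iterate_derivative_map, iterate_derivative_hermite, nsmul_eq_mul, Polynomial.map_mul,
    Polynomial.map_natCast, eval_mul, eval_natCast, mul_assoc, integral_const_mul]
  simp_rw [← hermiteP_eq_eval_map]

theorem integral_hermiteP_mul_hermiteP_mul_gaussianPDFReal (m n : ℕ) :
    ∫ x, hermiteP m x * hermiteP n x * gaussianPDFReal 0 1 x = if m = n then (m ! : ℝ) else 0 := by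
  wlog hnm : n ≤ m generalizing m n
  · simp_rw [mul_comm (hermiteP m _), this n m (by omega), eq_comm]
    split_ifs with h <;> simp [h]
  rw [integral_hermiteP_mul_hermiteP_mul_gaussianPDFReal_eq_descFactorial_mul]
  rcases hnm.lt_or_eq with hlt | rfl
  · simp [Nat.descFactorial_eq_zero_iff_lt.mpr hlt, hlt.ne']
  · simp [hermiteP_zero, integral_gaussianPDFReal_eq_one, Nat.descFactorial_self]

theorem integrable_hermiteP_mul_hermiteP_mul_gaussianPDFReal (m n : ℕ) :
    Integrable fun x => hermiteP m x * hermiteP n x * gaussianPDFReal 0 1 x := by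
  simpa only [eval_mul, ← hermiteP_eq_eval_map] using integrable_eval_mul_gaussianPDFReal
    ((hermite m).map (algebraMap ℤ ℝ) * (hermite n).map (algebraMap ℤ ℝ))

theorem integral_sq_sum_hermiteP_mul_gaussianPDFReal (s : Finset ℕ) (c : ℕ → ℝ) :
    ∫ x, (∑ m ∈ s, c m * hermiteP m x) ^ 2 * gaussianPDFReal 0 1 x = ∑ m ∈ s, c m ^ 2 * m ! := by
  have hexpand (x : ℝ) : (∑ m ∈ s, c m * hermiteP m x) ^ 2 * gaussianPDFReal 0 1 x
      = ∑ m ∈ s, ∑ n ∈ s, c m * c n * (hermiteP m x * hermiteP n x * gaussianPDFReal 0 1 x) := by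
    rw [sq, Finset.sum_mul_sum, Finset.sum_mul]
    refine Finset.sum_congr rfl fun m _ => ?_
    rw [Finset.sum_mul]
    refine Finset.sum_congr rfl fun n _ => ?_
    ring
  have hintegrable (m n : ℕ) := (integrable_hermiteP_mul_hermiteP_mul_gaussianPDFReal m n).const_mul
  simp_rw [hexpand]
  rw [integral_finsetSum _ fun m _ => integrable_finsetSum _ fun n _ => hintegrable m n _]
  refine Finset.sum_congr rfl fun m hm => ?_
  rw [integral_finsetSum _ fun n _ => hintegrable m n _]
  simp_rw [integral_const_mul, integral_hermiteP_mul_hermiteP_mul_gaussianPDFReal, mul_ite,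
    mul_zero, Finset.sum_ite_eq, if_pos hm, sq]

theorem integral_gaussianReal_eq_integral_add_mul_gaussianPDFReal (θ : ℝ) (f : ℝ → ℝ) :
    ∫ x, f x ∂gaussianReal θ 1 = ∫ x, f (x + θ) * gaussianPDFReal 0 1 x := by
  rw [← zero_add θ, ← gaussianReal_map_add_const, (measurableEmbedding_addRight θ).integral_map,
    integral_gaussianReal_eq_integral_smul one_ne_zero, zero_add]
  simp_rw [smul_eq_mul, mul_comm]

theorem sum_sq_choose_mul_pow_mul_factorial_le (k : ℕ) (t : ℝ) :
    ∑ m ∈ Finset.range (k + 1), ((k.choose m : ℝ) * t ^ (k - m)) ^ 2 * m ! ≤ (k + t ^ 2) ^ k := by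
  rw [add_pow]
  refine Finset.sum_le_sum fun m _ => ?_
  have hdesc : (k.descFactorial m : ℝ) ≤ (k : ℝ) ^ m := by
    exact_mod_cast Nat.descFactorial_le_pow k m
  calc ((k.choose m : ℝ) * t ^ (k - m)) ^ 2 * m !
      = k.choose m * k.descFactorial m * (t ^ 2) ^ (k - m) := by
        rw [Nat.descFactorial_eq_factorial_mul_choose]
        push_cast
        ring
    _ ≤ k.choose m * (k : ℝ) ^ m * (t ^ 2) ^ (k - m) := by gcongr
    _ = (k : ℝ) ^ m * (t ^ 2) ^ (k - m) * k.choose m := by ring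

theorem natCast_pow_mul_one_add_div_pow (k : ℕ) (a : ℝ) :
    (k : ℝ) ^ k * (1 + a / k) ^ k = (k + a) ^ k := by
  rw [← mul_pow]
  rcases k.eq_zero_or_pos with rfl | hk
  · simp
  · congr 1
    field_simp

theorem stmt8_general (θ : ℝ) (k : ℕ) :
    ∫ x, (hermiteP k x) ^ 2 ∂(gaussianReal θ 1) ≤ (k : ℝ) ^ k * (1 + θ ^ 2 / k) ^ k := by
  rw [integral_gaussianReal_eq_integral_add_mul_gaussianPDFReal, natCast_pow_mul_one_add_div_pow]
  simp_rw [hermiteP_add]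
  rw [integral_sq_sum_hermiteP_mul_gaussianPDFReal]
  exact sum_sq_choose_mul_pow_mul_factorial_le k θ

theorem stmt8 (θ : ℝ) (k : ℕ) (hk : 1 ≤ k) :
    ∫ x, (hermiteP k x) ^ 2 ∂(gaussianReal θ 1) ≤ (k : ℝ) ^ k * (1 + θ ^ 2 / k) ^ k :=
  stmt8_general θ k
end
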